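/- CCM of GHZ states: fix d ≥ 0 and N ≥ 2; suppose that D(ρ_{GHZ_N}, (ρ_{GHZ_N})_A ⊠ (ρ_{GHZ_N})_B) = 1 for every bipartition (A,B) of the N qubits, and that for every M with 2 ≤ M ≤ N−1 and every bipartition (A,B) of the M qubits, D(τ_M, (τ_M)_A ⊠ (τ_M)_B) = d. Then C(ρ_{GHZ_N}) = F(1, N), where F is defined as in the context. -/

import Mathlib

open scoped BigOperators ComplexOrder Matrix

/-- Matrices representing operators on qubits indexed by `ι`. -/
abbrev QMat (ι : Type) : Type := Matrix (ι → Fin 2) (ι → Fin 2) ℂ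

/-- A multi-qubit state: positive semidefinite with trace one. -/
def IsState {ι : Type} [Fintype ι] [DecidableEq ι] (ρ : QMat ι) : Prop :=
  ρ.PosSemidef ∧ ρ.trace = 1

/-- Combine `u : A → Fin 2` with `w : Aᶜ → Fin 2` into a function on all qubits. -/
def glue {ι : Type} [Fintype ι] [DecidableEq ι] (A : Finset ι)
    (u : {x // x ∈ A} → Fin 2) (w : {x // x ∈ Aᶜ} → Fin 2) : ι → Fin 2 :=
  fun x => if h : x ∈ A then u ⟨x, h⟩ else w ⟨x, Finset.mem_compl.mpr h⟩

/-- The reduced matrix on the qubits in `A`, obtained by tracing out `Aᶜ`;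
`Tr_B ρ = reduceTo Bᶜ ρ`. -/
noncomputable def reduceTo {ι : Type} [Fintype ι] [DecidableEq ι] (A : Finset ι)
    (ρ : QMat ι) : QMat {x // x ∈ A} :=
  fun u v => ∑ w : {x // x ∈ Aᶜ} → Fin 2, ρ (glue A u w) (glue A v w)

/-- The Kronecker product of a state on `A` and a state on `Aᶜ`, with the tensor
factors placed back at their original qubit positions. -/
def boxProd {ι : Type} [Fintype ι] [DecidableEq ι] (A : Finset ι)
    (σ₁ : QMat {x // x ∈ A}) (σ₂ : QMat {x // x ∈ Aᶜ}) : QMat ι :=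
  fun x y =>
    σ₁ (fun a => x a.1) (fun a => y a.1) * σ₂ (fun b => x b.1) (fun b => y b.1)

/-- The cumulative correlation measure (CCM), defined recursively: it vanishes on
one-qubit states, and otherwise is the minimum over all bipartitions `(A, Aᶜ)` of
`2^(N-2) * D(ρ, ρ_A ⊠ ρ_{Aᶜ}) + C(ρ_A) + C(ρ_{Aᶜ})`. -/
noncomputable def CCM (D : ∀ (κ : Type) [Fintype κ] [DecidableEq κ], QMat κ → QMat κ → ℝ)
    (ι : Type) [Fintype ι] [DecidableEq ι] (ρ : QMat ι) : ℝ :=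
  if Fintype.card ι ≤ 1 then 0
  else
    sInf { r : ℝ |
      ∃ A : {A : Finset ι // A.Nonempty ∧ Aᶜ.Nonempty},
        r = (2 : ℝ) ^ (Fintype.card ι - 2) *
              D ι ρ (boxProd A.1 (reduceTo A.1 ρ) (reduceTo (A.1 : Finset ι)ᶜ ρ)) +
            CCM D {x // x ∈ A.1} (reduceTo A.1 ρ) +
            CCM D {x // x ∈ (A.1 : Finset ι)ᶜ} (reduceTo (A.1 : Finset ι)ᶜ ρ) }
termination_by Fintype.card ι
decreasing_by
  · have hA : (A.1 : Finset ι) ≠ Finset.univ := by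
      intro h
      rcases A.2.2 with ⟨x, hx⟩
      rw [h] at hx
      simp at hx
    calc Fintype.card {x // x ∈ A.1} = (A.1 : Finset ι).card := Fintype.card_coe _
      _ < Fintype.card ι := (Finset.card_lt_iff_ne_univ _).mpr hA
  · have hA : ((A.1 : Finset ι)ᶜ : Finset ι) ≠ Finset.univ :=
      (Finset.compl_ne_univ_iff_nonempty _).mpr A.2.1
    calc Fintype.card {x // x ∈ (A.1 : Finset ι)ᶜ} = ((A.1 : Finset ι)ᶜ).card :=
        Fintype.card_coe _
      _ < Fintype.card ι := (Finset.card_lt_iff_ne_univ _).mpr hA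
/-- The GHZ state vector on qubits indexed by `ι`: value `1/√2` at the all-zeros
and all-ones functions, and `0` elsewhere. -/
noncomputable def ghzVec (ι : Type) [Fintype ι] [DecidableEq ι] : (ι → Fin 2) → ℂ :=
  fun x => if x = (fun _ => 0) ∨ x = (fun _ => 1) then ((Real.sqrt 2 : ℂ))⁻¹ else 0

/-- The GHZ projector `|GHZ⟩⟨GHZ|`. -/
noncomputable def ghzProj (ι : Type) [Fintype ι] [DecidableEq ι] : QMat ι :=
  fun x y => ghzVec ι x * star (ghzVec ι y)

/-- The GHZ-diagonal state `τ = ½(e₀e₀† + e₁e₁†)`: the diagonal matrix with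
entries `½` at the all-zeros and all-ones indices and `0` elsewhere. -/
noncomputable def tau (ι : Type) [Fintype ι] [DecidableEq ι] : QMat ι :=
  fun x y =>
    (if x = (fun _ => 0) ∧ y = (fun _ => 0) then ((2 : ℂ))⁻¹ else 0) +
    (if x = (fun _ => 1) ∧ y = (fun _ => 1) then ((2 : ℂ))⁻¹ else 0)
/-- The GHZ recursion value `F(x, n)` with fixed parameter `d`:
`F(x,1) = 0`, `F(x,2) = x`, `F(x,3) = 2x + d`,
`F(x,N) = 2^(N−2)·x + 2·F(d, N/2)` for even `N ≥ 4`, and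
`F(x,N) = 2^(N−2)·x + F(d, (N−1)/2) + F(d, (N+1)/2)` for odd `N ≥ 5`. -/
noncomputable def F (d : ℝ) (x : ℝ) (n : ℕ) : ℝ :=
  if n ≤ 1 then 0
  else if n = 2 then x
  else if n = 3 then 2 * x + d
  else if n % 2 = 0 then (2 : ℝ) ^ (n - 2) * x + 2 * F d d (n / 2)
  else (2 : ℝ) ^ (n - 2) * x + F d d ((n - 1) / 2) + F d d ((n + 1) / 2)
termination_by n
decreasing_by
  · omega
  · omega
  · omega

/-! Tracing out a nonempty set of qubits kills the coherence between `|0…0⟩` and `|1…1⟩`, so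
every proper reduced state of `GHZ_N`, and every reduced state of `τ_M`, is `τ` on the remaining
qubits. Under the hypotheses, a bipartition into `k` and `n - k` qubits therefore costs
`2^(n-2)·x + G k + G (n - k)` with `G = F(d, ·)` (by induction for `τ`). Since
`G (n+1) - G n = 2^(n-2)·d + (G (n/2 + 1) - G (n/2))`, the increments of `G` are nondecreasing
for `d ≥ 0`, and this discrete convexity makes the balanced split optimal. -/

open Finset

theorem F_of_le_one (d x : ℝ) {n : ℕ} (h : n ≤ 1) : F d x n = 0 := by
  rw [F, if_pos h]

theorem F_eq_of_two_le (d x : ℝ) {n : ℕ} (h : 2 ≤ n) :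
    F d x n = 2 ^ (n - 2) * x + F d d (n / 2) + F d d ((n + 1) / 2) := by
  rw [F, if_neg (by omega)]
  rcases (by omega : n = 2 ∨ n = 3 ∨ 4 ≤ n) with rfl | rfl | h4
  · simp [F_of_le_one]
  · norm_num [F_of_le_one]
    rw [F]
    norm_num
  · rw [if_neg (by omega), if_neg (by omega)]
    split_ifs with hn
    · rw [show (n + 1) / 2 = n / 2 by omega]; ring
    · rw [show (n - 1) / 2 = n / 2 by omega]

theorem F_succ_sub (d : ℝ) {n : ℕ} (h : 2 ≤ n) :
    F d d (n + 1) - F d d n = 2 ^ (n - 2) * d + (F d d (n / 2 + 1) - F d d (n / 2)) := by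
  rw [F_eq_of_two_le d d h, F_eq_of_two_le d d (by omega : 2 ≤ n + 1),
    show n + 1 - 2 = n - 2 + 1 by omega, pow_succ, show (n + 1 + 1) / 2 = n / 2 + 1 by omega]
  rcases (by omega : (n + 1) / 2 = n / 2 ∨ (n + 1) / 2 = n / 2 + 1) with h' | h' <;>
  · rw [h']; ring

theorem F_succ_sub_le {d : ℝ} (hd : 0 ≤ d) {a : ℕ} (ha : 1 ≤ a) :
    F d d (a + 1) - F d d a ≤ F d d (a + 1 + 1) - F d d (a + 1) := by
  induction a using Nat.strong_induction_on with
  | _ a ih =>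
  rcases (by omega : a = 1 ∨ 2 ≤ a) with rfl | h2
  · rw [F_succ_sub d le_rfl]
    norm_num [hd]
  · rw [F_succ_sub d h2, F_succ_sub d (by omega : 2 ≤ a + 1)]
    have hpow : (2 : ℝ) ^ (a - 2) * d ≤ 2 ^ (a + 1 - 2) * d := by
      gcongr
      · norm_num
      · omega
    have hhalf : F d d (a / 2 + 1) - F d d (a / 2) ≤
        F d d ((a + 1) / 2 + 1) - F d d ((a + 1) / 2) := by
      rcases (by omega : (a + 1) / 2 = a / 2 ∨ (a + 1) / 2 = a / 2 + 1) with h | h <;> rw [h]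
      exact ih (a / 2) (by omega) (by omega)
    linarith

theorem F_sub_monotoneOn {d : ℝ} (hd : 0 ≤ d) :
    MonotoneOn (fun a => F d d (a + 1) - F d d a) (Set.Ici 1) :=
  monotoneOn_nat_Ici_of_le_succ fun _ ha => F_succ_sub_le hd ha

theorem half_add_half_le_of_monotoneOn_sub {f : ℕ → ℝ}
    (hf : MonotoneOn (fun a => f (a + 1) - f a) (Set.Ici 1)) {n k : ℕ} (hk : 1 ≤ k)
    (hkn : k < n) : f (n / 2) + f ((n + 1) / 2) ≤ f k + f (n - k) := by
  wlog hk2 : k ≤ n / 2 generalizing k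
  · have := this (k := n - k) (by omega) (by omega) (by omega)
    rwa [show n - (n - k) = k by omega, add_comm (f (n - k))] at this
  obtain ⟨m, hm⟩ : ∃ m, n / 2 = k + m := ⟨n / 2 - k, by omega⟩
  have htele : ∀ a, f (a + m) - f a = ∑ j ∈ range m, (f (a + j + 1) - f (a + j)) :=
    fun a => (sum_range_sub (fun j => f (a + j)) m).symm
  have : f (k + m) - f k ≤ f ((n + 1) / 2 + m) - f ((n + 1) / 2) := by
    rw [htele, htele]
    refine sum_le_sum fun j _ => ?_
    exact hf (by simp; omega) (by simp; omega) (by omega)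
  rw [hm, show n - k = (n + 1) / 2 + m by omega]
  linarith

section PartialTrace

variable {ι : Type} [Fintype ι] [DecidableEq ι]

theorem glue_eq_const_iff (A : Finset ι) (u : {x // x ∈ A} → Fin 2)
    (w : {x // x ∈ Aᶜ} → Fin 2) (c : Fin 2) :
    glue A u w = (fun _ => c) ↔ (u = fun _ => c) ∧ (w = fun _ => c) := by
  simp only [funext_iff, glue, Subtype.forall, mem_compl]
  constructor
  · intro h
    exact ⟨fun x hx => by simpa [hx] using h x, fun x hx => by simpa [hx] using h x⟩
  · intro h x
    split_ifs with hx
    exacts [h.1 x hx, h.2 x hx]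

theorem reduceTo_tau (A : Finset ι) : reduceTo A (tau ι) = tau {x // x ∈ A} := by
  ext u v
  simp only [reduceTo, tau, glue_eq_const_iff, and_and_and_comm, and_self, ite_and, sum_add_distrib, sum_ite_irrel, sum_ite_eq',
    mem_univ, if_true, sum_const_zero]

-- `ghzProj` and `tau` differ only at the coherences between `0…0` and `1…1`.
theorem ghzProj_apply_of_apply_eq {x y : ι → Fin 2} {i : ι} (h : x i = y i) :
    ghzProj ι x y = tau ι x y := by
  have hsq : ((Real.sqrt 2 : ℂ))⁻¹ * star ((Real.sqrt 2 : ℂ))⁻¹ = 2⁻¹ := by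
    rw [← Complex.ofReal_inv, Complex.star_def, Complex.conj_ofReal, ← Complex.ofReal_mul,
      ← mul_inv, Real.mul_self_sqrt zero_le_two]
    norm_num
  have h01 : (fun _ : ι => (0 : Fin 2)) ≠ fun _ => 1 := fun h => absurd (congrFun h i) (by decide)
  simp only [ghzProj, ghzVec, tau]
  by_cases hx0 : x = fun _ => 0 <;> by_cases hx1 : x = fun _ => 1 <;>
    by_cases hy0 : y = fun _ => 0 <;> by_cases hy1 : y = fun _ => 1 <;>
    simp_all

theorem reduceTo_ghzProj {A : Finset ι} (hA : Aᶜ.Nonempty) :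
    reduceTo A (ghzProj ι) = tau {x // x ∈ A} := by
  obtain ⟨b, hb⟩ := hA
  rw [← reduceTo_tau]
  ext u v
  refine sum_congr rfl fun w _ => ghzProj_apply_of_apply_eq (i := b) ?_
  simp [glue, mem_compl.mp hb]

end PartialTrace

section CumulativeCorrelation

variable (D : ∀ (κ : Type) [Fintype κ] [DecidableEq κ], QMat κ → QMat κ → ℝ)
  {ι : Type} [Fintype ι] [DecidableEq ι]

noncomputable def splitCost (ρ : QMat ι) (A : Finset ι) : ℝ :=
  2 ^ (Fintype.card ι - 2) * D ι ρ (boxProd A (reduceTo A ρ) (reduceTo Aᶜ ρ)) +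
    CCM D {x // x ∈ A} (reduceTo A ρ) + CCM D {x // x ∈ Aᶜ} (reduceTo Aᶜ ρ)

theorem CCM_of_card_le_one (ρ : QMat ι) (h : Fintype.card ι ≤ 1) : CCM D ι ρ = 0 := by
  rw [CCM, if_pos h]

theorem CCM_eq_of_splitCost_eq {ρ : QMat ι} {G : ℕ → ℝ}
    (hG : MonotoneOn (fun a => G (a + 1) - G a) (Set.Ici 1)) (c : ℝ)
    (h2 : 2 ≤ Fintype.card ι)
    (hcost : ∀ A : Finset ι, A.Nonempty → Aᶜ.Nonempty → splitCost D ρ A = c + G #A + G #Aᶜ) :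
    CCM D ι ρ = c + G (Fintype.card ι / 2) + G ((Fintype.card ι + 1) / 2) := by
  obtain ⟨A₀, -, hA₀⟩ := exists_subset_card_eq (s := (univ : Finset ι))
    (n := Fintype.card ι / 2) (by rw [card_univ]; omega)
  have hA₀c : #A₀ᶜ = (Fintype.card ι + 1) / 2 := by rw [card_compl, hA₀]; omega
  have hne : A₀.Nonempty := card_pos.mp (by omega)
  have hcne : A₀ᶜ.Nonempty := card_pos.mp (by omega)
  rw [CCM, if_neg (by omega)]
  refine IsLeast.csInf_eq ⟨⟨⟨A₀, hne, hcne⟩, ?_⟩, ?_⟩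
  · change _ = splitCost D ρ A₀
    rw [hcost A₀ hne hcne, hA₀, hA₀c]
  · rintro r ⟨⟨A, hA, hAc⟩, rfl⟩
    change _ ≤ splitCost D ρ A
    rw [hcost A hA hAc, card_compl]
    have hA_lt : #A < Fintype.card ι := by have := hAc.card_pos; rw [card_compl] at this; omega
    have := half_add_half_le_of_monotoneOn_sub hG hA.card_pos hA_lt
    linarith

theorem CCM_tau_eq_F {d : ℝ} (hd : 0 ≤ d) {M : ℕ}
    (hτ : ∀ (κ : Type) [Fintype κ] [DecidableEq κ],
      2 ≤ Fintype.card κ → Fintype.card κ ≤ M →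
      ∀ A : Finset κ, A.Nonempty → Aᶜ.Nonempty →
        D κ (tau κ) (boxProd A (reduceTo A (tau κ)) (reduceTo Aᶜ (tau κ))) = d)
    (hM : Fintype.card ι ≤ M) :
    CCM D ι (tau ι) = F d d (Fintype.card ι) := by
  induction hn : Fintype.card ι using Nat.strong_induction_on generalizing ι with
  | _ n ih =>
  rcases (by omega : n ≤ 1 ∨ 2 ≤ n) with h1 | h2
  · rw [CCM_of_card_le_one D _ (by omega), F_of_le_one d d h1]
  rw [CCM_eq_of_splitCost_eq D (F_sub_monotoneOn hd) (2 ^ (n - 2) * d) (by omega), hn,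
    ← F_eq_of_two_le d d h2]
  intro A hA hAc
  have hcard : #A + #Aᶜ = n := by rw [card_add_card_compl, hn]
  have hA_pos := hA.card_pos
  have hAc_pos := hAc.card_pos
  rw [splitCost, hτ ι (by omega) hM A hA hAc, reduceTo_tau, reduceTo_tau, hn,
    ih #A (by omega) (by simp; omega) (Fintype.card_coe A),
    ih #Aᶜ (by omega) (by simp; omega) (Fintype.card_coe Aᶜ)]

end CumulativeCorrelation

/-- CCM of GHZ states: fix `d ≥ 0` and `N ≥ 2`; suppose
`D(ρ_{GHZ_N}, (ρ_{GHZ_N})_A ⊠ (ρ_{GHZ_N})_B) = 1` for every bipartition `(A,B)`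
of the `N` qubits, and `D(τ_M, (τ_M)_A ⊠ (τ_M)_B) = d` for every system of `M`
qubits with `2 ≤ M ≤ N − 1` and every bipartition. Then `C(ρ_{GHZ_N}) = F(1, N)`. -/
theorem ccm_ghz_eq_F
    (D : ∀ (κ : Type) [Fintype κ] [DecidableEq κ], QMat κ → QMat κ → ℝ)
    (d : ℝ) (hd : 0 ≤ d) (N : ℕ) (hN : 2 ≤ N)
    (hghz : ∀ A : Finset (Fin N), A.Nonempty → Aᶜ.Nonempty →
      D (Fin N) (ghzProj (Fin N))
        (boxProd A (reduceTo A (ghzProj (Fin N)))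
          (reduceTo Aᶜ (ghzProj (Fin N)))) = 1)
    (hτ : ∀ (ι : Type) [Fintype ι] [DecidableEq ι],
      2 ≤ Fintype.card ι → Fintype.card ι ≤ N - 1 →
      ∀ A : Finset ι, A.Nonempty → Aᶜ.Nonempty →
        D ι (tau ι) (boxProd A (reduceTo A (tau ι)) (reduceTo Aᶜ (tau ι))) = d) :
    CCM D (Fin N) (ghzProj (Fin N)) = F d 1 N := by
  rw [CCM_eq_of_splitCost_eq D (F_sub_monotoneOn hd) (2 ^ (N - 2) * 1) (by simpa),
    Fintype.card_fin, ← F_eq_of_two_le d 1 hN]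
  intro A hA hAc
  have hcard : #A + #Aᶜ = N := by rw [card_add_card_compl, Fintype.card_fin]
  have hA_pos := hA.card_pos
  have hAc_pos := hAc.card_pos
  rw [splitCost, Fintype.card_fin, hghz A hA hAc, reduceTo_ghzProj hAc,
    reduceTo_ghzProj (by rwa [compl_compl]),
    CCM_tau_eq_F D hd hτ (by simp; omega), CCM_tau_eq_F D hd hτ (by simp; omega),
    Fintype.card_coe, Fintype.card_coe]
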